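/- arXiv:2110.10715 — 3 statements merged into one kernel-verified Lean document; each statement's English description precedes it below -/
import Mathlib

section
/- Let n ∈ ℤ, c, c_u ∈ ℝ, and consider the degree-4 characteristic polynomial P(λ) = det(λ·I - L_n^SH) of the companion matrix L_n^SH with ε = 0 and c_p = c_u, namely P(λ) = λ⁴ - (c_u - 4in)λ³ - (3inc_u + 6n² - 2)λ² - (-3c_u n² + c + 4i(n³ - n))λ - (-ic_u n³ + inc_u - (1-n²)²). Then for every real number λᵢ, the real part of P(iλᵢ) equals ((n + λᵢ)² - 1)². -/
open Complex

/-- For the characteristic polynomial of `L_n^SH` at `ε = 0`, `c_p = c_u`,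
the real part of `P(iλᵢ)` equals `((n+λᵢ)² - 1)²`. -/
theorem charpoly_real_part (n : ℤ) (c c_u : ℝ) (lam : ℝ) :
    ((Complex.I * (lam : ℂ)) ^ 4
      - ((c_u : ℂ) - 4 * Complex.I * (n : ℂ)) * (Complex.I * (lam : ℂ)) ^ 3
      - (3 * Complex.I * (n : ℂ) * (c_u : ℂ) + 6 * (n : ℂ) ^ 2 - 2)
          * (Complex.I * (lam : ℂ)) ^ 2
      - (-3 * (c_u : ℂ) * (n : ℂ) ^ 2 + (c : ℂ)
          + 4 * Complex.I * ((n : ℂ) ^ 3 - (n : ℂ))) * (Complex.I * (lam : ℂ))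
      - (-Complex.I * (c_u : ℂ) * (n : ℂ) ^ 3 + Complex.I * (n : ℂ) * (c_u : ℂ)
          - (1 - (n : ℂ) ^ 2) ^ 2)).re
    = (((n : ℝ) + lam) ^ 2 - 1) ^ 2 := by
  simp only [Complex.ext_iff, sub_re, mul_re, mul_im, add_re, add_im, sub_im, neg_re, neg_im,
    pow_succ, pow_zero, one_mul, Complex.I_re, Complex.I_im, Complex.ofReal_re, Complex.ofReal_im,
    Complex.one_re, Complex.one_im, Complex.ofReal_intCast, Complex.intCast_re, Complex.intCast_im,
    Complex.re_ofNat, Complex.im_ofNat]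
  ring
end

section
/- Let n ∈ ℤ with n ≠ 1 and n ≠ -1, and let c, c_u ∈ ℝ with c ≠ c_u. Then the 4×4 matrix L_n^SH (at ε = 0, c_p = c_u) has no purely imaginary eigenvalue: for every λᵢ ∈ ℝ, det(iλᵢ·I - L_n^SH) ≠ 0. -/
open Complex Matrix

theorem my_det_fin_four (M : Matrix (Fin 4) (Fin 4) ℂ) :
    M.det =
      M 0 0 * (M 1 1 * (M 2 2 * M 3 3 - M 2 3 * M 3 2) - M 1 2 * (M 2 1 * M 3 3 - M 2 3 * M 3 1)
        + M 1 3 * (M 2 1 * M 3 2 - M 2 2 * M 3 1))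
      - M 0 1 * (M 1 0 * (M 2 2 * M 3 3 - M 2 3 * M 3 2) - M 1 2 * (M 2 0 * M 3 3 - M 2 3 * M 3 0)
        + M 1 3 * (M 2 0 * M 3 2 - M 2 2 * M 3 0))
      + M 0 2 * (M 1 0 * (M 2 1 * M 3 3 - M 2 3 * M 3 1) - M 1 1 * (M 2 0 * M 3 3 - M 2 3 * M 3 0)
        + M 1 3 * (M 2 0 * M 3 1 - M 2 1 * M 3 0))
      - M 0 3 * (M 1 0 * (M 2 1 * M 3 2 - M 2 2 * M 3 1) - M 1 1 * (M 2 0 * M 3 2 - M 2 2 * M 3 0)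
        + M 1 2 * (M 2 0 * M 3 1 - M 2 1 * M 3 0)) := by
  simp [Matrix.det_succ_row_zero, Fin.sum_univ_succ,
    show (Fin.succ 2 : Fin 4) = 3 from rfl,
    show (Fin.castSucc 2 : Fin 4) = 2 from rfl,
    show (Fin.succAbove 2 2 : Fin 4) = 3 from rfl,
    show (Fin.succAbove 1 2 : Fin 4) = 3 from rfl,
    show (Fin.succAbove 3 2 : Fin 4) = 2 from rfl]
  ring

/-- For `n ≠ ±1` and `c ≠ c_u`, the companion matrix `L_n^SH` (at `ε = 0`,
`c_p = c_u`) has no purely imaginary eigenvalue. -/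
theorem no_imaginary_eigenvalues_SH (n : ℤ) (hn1 : n ≠ 1) (hn2 : n ≠ -1)
    (c c_u : ℝ) (hc : c ≠ c_u) (lam : ℝ) :
    Matrix.det ((Complex.I * (lam : ℂ)) • (1 : Matrix (Fin 4) (Fin 4) ℂ)
      - !![0, 1, 0, 0;
           0, 0, 1, 0;
           0, 0, 0, 1;
           -Complex.I * (c_u : ℂ) * (n : ℂ) ^ 3 + Complex.I * (n : ℂ) * (c_u : ℂ)
             - (1 - (n : ℂ) ^ 2) ^ 2,
           -3 * (c_u : ℂ) * (n : ℂ) ^ 2 + (c : ℂ)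
             + 4 * Complex.I * ((n : ℂ) ^ 3 - (n : ℂ)),
           3 * Complex.I * (n : ℂ) * (c_u : ℂ) + 6 * (n : ℂ) ^ 2 - 2,
           (c_u : ℂ) - 4 * Complex.I * (n : ℂ)]) ≠ 0 := by
  have key : Matrix.det ((Complex.I * (lam : ℂ)) • (1 : Matrix (Fin 4) (Fin 4) ℂ)
      - !![0, 1, 0, 0;
           0, 0, 1, 0;
           0, 0, 0, 1;
           -Complex.I * (c_u : ℂ) * (n : ℂ) ^ 3 + Complex.I * (n : ℂ) * (c_u : ℂ)
             - (1 - (n : ℂ) ^ 2) ^ 2,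
           -3 * (c_u : ℂ) * (n : ℂ) ^ 2 + (c : ℂ)
             + 4 * Complex.I * ((n : ℂ) ^ 3 - (n : ℂ)),
           3 * Complex.I * (n : ℂ) * (c_u : ℂ) + 6 * (n : ℂ) ^ 2 - 2,
           (c_u : ℂ) - 4 * Complex.I * (n : ℂ)]) =
      (((((lam + (n : ℝ)) ^ 2 - 1) ^ 2 : ℝ) : ℂ)
        + ((c_u * ((lam + (n : ℝ)) ^ 3 - (n : ℝ)) - c * lam : ℝ) : ℂ) * Complex.I) := by
    rw [my_det_fin_four]
    simp only [Matrix.sub_apply, Matrix.smul_apply, Matrix.one_apply, Matrix.cons_val',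
      Matrix.cons_val_zero, Matrix.cons_val_one, Matrix.head_cons, Matrix.empty_val',
      Matrix.cons_val_fin_one, Matrix.head_fin_const, Matrix.cons_val_two, Matrix.tail_cons,
      Matrix.cons_val_three]
    norm_num
    rw [show ((n : ℤ) : ℂ) = (((n : ℤ) : ℝ) : ℂ) by push_cast; ring]
    apply Complex.ext <;>
      simp [Complex.ext_iff, Complex.mul_re, Complex.mul_im, pow_succ] <;> ring
  rw [key]
  intro h
  have h1 : (((lam + (n : ℝ)) ^ 2 - 1) ^ 2 : ℝ) = 0 := by
    have := congrArg Complex.re h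
    simpa only [Complex.add_re, Complex.ofReal_re, Complex.mul_re, Complex.ofReal_im,
      Complex.I_re, Complex.I_im, Complex.zero_re, mul_zero, zero_mul, mul_one, sub_zero,
      add_zero, zero_sub, neg_zero] using this
  have h2 : (c_u * ((lam + (n : ℝ)) ^ 3 - (n : ℝ)) - c * lam : ℝ) = 0 := by
    have := congrArg Complex.im h
    simpa only [Complex.add_im, Complex.ofReal_im, Complex.mul_im, Complex.ofReal_re,
      Complex.I_re, Complex.I_im, Complex.zero_im, mul_zero, zero_mul, mul_one, sub_zero,
      add_zero, zero_add, zero_sub, neg_zero] using this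
  have hmu : (lam + (n : ℝ)) ^ 2 = 1 := by nlinarith
  have hn' : ((n : ℝ)) ^ 2 ≠ 1 := by
    intro h
    have hz : (n : ℤ) ^ 2 = 1 := by exact_mod_cast h
    have : (n - 1) * (n + 1) = 0 := by ring_nf; omega
    rcases mul_eq_zero.mp this with h' | h' <;> omega
  have hlam : lam = 0 := by
    have hQ : (c_u - c) * lam = 0 := by linear_combination h2 - c_u * (lam + (n : ℝ)) * hmu
    rcases mul_eq_zero.mp hQ with h' | h'
    · exact absurd (by linarith) hc
    · exact h'
  apply hn'
  rw [hlam] at hmu; simpa using hmu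
end

section
/- Let n ∈ ℤ, c, c_u, c_v ∈ ℝ, and consider the 2×2 matrix L_n^con = [[0,1],[E_n, F_n]] with E_n = -inc_v + n² - inc_u and F_n = -(c + c_v + 2in). If λᵢ ∈ ℝ is such that iλᵢ is an eigenvalue of L_n^con, then λᵢ = -n and n(c_u - c) = 0. In particular, if c ≠ c_u, then L_n^con has no purely imaginary eigenvalues for n ≠ 0. -/
open Complex Matrix

/-- If `iλᵢ` is an eigenvalue of `L_n^con`, then `λᵢ = -n` and `n(c_u - c) = 0`;
in particular for `c ≠ c_u` there are no purely imaginary eigenvalues for `n ≠ 0`. -/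
theorem no_imaginary_eigenvalues_con (n : ℤ) (c c_u c_v : ℝ) (lam : ℝ)
    (h : Matrix.det ((Complex.I * (lam : ℂ)) • (1 : Matrix (Fin 2) (Fin 2) ℂ)
      - !![0, 1;
           -Complex.I * (n : ℂ) * (c_v : ℂ) + (n : ℂ) ^ 2
             - Complex.I * (n : ℂ) * (c_u : ℂ),
           -((c : ℂ) + (c_v : ℂ) + 2 * Complex.I * (n : ℂ))]) = 0) :
    lam = -(n : ℝ) ∧ (n : ℝ) * (c_u - c) = 0 := by
  simp only [Matrix.det_fin_two, Matrix.sub_apply, Matrix.smul_apply, Matrix.one_apply,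
    Matrix.cons_val', Matrix.cons_val_zero, Matrix.cons_val_one, Matrix.head_cons,
    Matrix.head_fin_const, Matrix.empty_val', Matrix.cons_val_fin_one, Fin.one_eq_zero_iff,
    Fin.zero_eq_one_iff, if_true, if_false, Matrix.of_apply, smul_eq_mul] at h
  norm_num at h
  have h' : ((-(lam + n)^2 : ℝ) : ℂ) + ((lam * (c + c_v) + n * (c_v + c_u) : ℝ) : ℂ) * Complex.I = 0 := by
    rw [← h]
    push_cast
    ring_nf
    simp [Complex.I_sq]
    ring
  rw [Complex.ext_iff] at h'
  simp only [Complex.add_re, Complex.add_im, Complex.ofReal_re, Complex.ofReal_im,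
    Complex.mul_re, Complex.mul_im, Complex.I_re, Complex.I_im, Complex.zero_re,
    Complex.zero_im, mul_zero, mul_one, zero_mul, sub_zero, add_zero, zero_add] at h'
  obtain ⟨h1, h2⟩ := h'
  have hl : lam = -(n : ℝ) := by nlinarith [sq_nonneg (lam + n)]
  refine ⟨hl, ?_⟩
  subst hl
  nlinarith [h2]
end
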